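/- Let n ≥ 1 and c ≥ 0 be integers and let σ', σ be integers with 0 ≤ σ' < σ ≤ n; set m := σ − σ'. Then, in ℚ(q), ∑_{i=σ'+1}^{σ} ∑_{j=−1}^{c−1} q^{c(j+1)σ' + (c+1)(j+2)(i−1−σ') + (c+1)(j+1)(σ−i) + c(j+1)(n−σ)} / [(q^{−j−1};q)_{j+1} (q;q)_{c−j−1}] = [(1 − q^{m(c+1)})/(1 − q^{c+1})] · [nc+m−1 choose c]_q. -/

import Mathlib

open Finset

noncomputable section

/-- The field `ℚ(q)`. -/
abbrev F : Type := RatFunc ℚ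

/-- The indeterminate `q`. -/
def qq : F := RatFunc.X

/-- The q-shifted factorial `(A; q)_z` in `ℚ(q)`. -/
def qPochF (A : F) (z : ℕ) : F := ∏ m ∈ Finset.range z, (1 - A * qq ^ m)

/-- The q-binomial coefficient `[n choose c]_q = (q^{n-c+1};q)_c / (q;q)_c`. -/
def qbinom (n c : ℕ) : F := qPochF (qq ^ ((n : ℤ) - c + 1)) c / qPochF qq c

lemma qq_ne_zero : (qq : F) ≠ 0 := RatFunc.X_ne_zero

lemma pow_qq_ne_one {k : ℕ} (hk : k ≠ 0) : (qq : F) ^ k ≠ 1 := by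
  intro h
  have h2 : (algebraMap (Polynomial ℚ) F) (Polynomial.X ^ k) =
      algebraMap (Polynomial ℚ) F 1 := by
    simpa [map_pow, RatFunc.algebraMap_X, qq] using h
  have h3 := RatFunc.algebraMap_injective ℚ h2
  have := congrArg Polynomial.natDegree h3
  simp [Polynomial.natDegree_X_pow] at this
  exact hk this

lemma one_sub_ne {k : ℕ} (hk : k ≠ 0) : (1 : F) - qq ^ k ≠ 0 := by
  intro h
  exact pow_qq_ne_one hk (by linear_combination -h)

lemma qPochF_qq_ne (z : ℕ) : qPochF qq z ≠ 0 := by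
  unfold qPochF
  refine Finset.prod_ne_zero_iff.mpr fun m _ => ?_
  have := one_sub_ne (k := m + 1) (by omega)
  intro h
  apply this
  rw [pow_succ']
  linear_combination h

lemma qPochF_succ (A : F) (z : ℕ) : qPochF A (z+1) = qPochF A z * (1 - A * qq ^ z) :=
  Finset.prod_range_succ _ _

/-- Gaussian binomial in F, with junk value 0 for k > n. -/
def Gq (n k : ℕ) : F := if k ≤ n then qPochF qq n / (qPochF qq k * qPochF qq (n - k)) else 0

lemma qPochF_zero (A : F) : qPochF A 0 = 1 := by simp [qPochF]

lemma Gq_zero (n : ℕ) : Gq n 0 = 1 := by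
  rw [Gq, if_pos (Nat.zero_le n), qPochF_zero, one_mul, Nat.sub_zero,
    div_self (qPochF_qq_ne n)]

lemma Gq_self (n : ℕ) : Gq n n = 1 := by
  rw [Gq, if_pos le_rfl, Nat.sub_self, qPochF_zero, mul_one, div_self (qPochF_qq_ne n)]

lemma Gq_top (n : ℕ) : Gq n (n+1) = 0 := by simp [Gq]

lemma Gq_pascal (c k : ℕ) (hk : k ≤ c) :
    Gq (c+1) (k+1) = Gq c (k+1) + qq ^ (c - k) * Gq c k := by
  rcases eq_or_lt_of_le hk with rfl | hlt
  · simp [Gq_self, Gq_top]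
  · obtain ⟨d, rfl⟩ : ∃ d, c = k + 1 + d := ⟨c - k - 1, by omega⟩
    have e1 : k + 1 + d + 1 - (k + 1) = d + 1 := by omega
    have e2 : k + 1 + d - (k + 1) = d := by omega
    have e3 : k + 1 + d - k = d + 1 := by omega
    rw [Gq, Gq, Gq, if_pos (by omega), if_pos (by omega), if_pos (by omega), e1, e2, e3]
    rw [qPochF_succ qq (k+1+d), qPochF_succ qq d, qPochF_succ qq k]
    have hK := qPochF_qq_ne k
    have hD := qPochF_qq_ne d
    have hC := qPochF_qq_ne (k+1+d)
    have h1 : (1:F) - qq * qq ^ k ≠ 0 := by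
      have := one_sub_ne (k := k+1) (by omega); rwa [pow_succ'] at this
    have h2 : (1:F) - qq * qq ^ d ≠ 0 := by
      have := one_sub_ne (k := d+1) (by omega); rwa [pow_succ'] at this
    field_simp
    ring_nf

lemma qbt (c : ℕ) (x : F) :
    ∑ j ∈ range (c+1), (-1:F)^j * qq^(j.choose 2) * x^j * Gq c j = qPochF x c := by
  induction c generalizing x with
  | zero => simp [Gq_zero, qPochF_zero]
  | succ c ih =>
    rw [Finset.sum_range_succ']
    have hstep : ∀ j ∈ range (c+1),
        (-1:F)^(j+1) * qq^((j+1).choose 2) * x^(j+1) * Gq (c+1) (j+1)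
        = (-1:F)^(j+1) * qq^((j+1).choose 2) * x^(j+1) * Gq c (j+1)
          + (-(x*qq^c)) * ((-1:F)^j * qq^(j.choose 2) * x^j * Gq c j) := by
      intro j hj
      rw [Finset.mem_range] at hj
      rw [Gq_pascal c j (by omega)]
      have hc2 : (j+1).choose 2 = j.choose 2 + j := by
        rw [Nat.choose_succ_succ, Nat.choose_one_right, Nat.add_comm]
      obtain ⟨d, rfl⟩ : ∃ d, c = j + d := ⟨c - j, by omega⟩
      have hd : j + d - j = d := by omega
      rw [hc2, hd, pow_add, pow_add, pow_succ, pow_succ]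
      ring
    rw [Finset.sum_congr rfl hstep, Finset.sum_add_distrib, ← Finset.mul_sum, ih x]
    have h0 : (-1:F)^0 * qq^(Nat.choose 0 2) * x^0 * Gq (c+1) 0
        = (-1:F)^0 * qq^(Nat.choose 0 2) * x^0 * Gq c 0 := by
      rw [Gq_zero, Gq_zero]
    rw [h0]
    rw [add_right_comm, ← Finset.sum_range_succ' (fun j => (-1:F)^j * qq^(j.choose 2) * x^j * Gq c j) (c+1)]
    rw [Finset.sum_range_succ, Gq_top, mul_zero, add_zero, ih x, qPochF_succ]
    ring

lemma sum_range_sub (k : ℕ) : ∑ m ∈ range k, (k - m) = (k+1).choose 2 := by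
  induction k with
  | zero => simp
  | succ k ih =>
    rw [Finset.sum_range_succ']
    simp only [Nat.succ_sub_succ, Nat.sub_zero]
    rw [ih]
    have h : (k+1+1).choose 2 = (k+1).choose 1 + (k+1).choose 2 :=
      Nat.choose_succ_succ _ _
    rw [Nat.choose_one_right] at h
    omega

lemma poch_neg (k : ℕ) :
    qq ^ ((k+1).choose 2) * qPochF (qq ^ (-(k:ℤ))) k = (-1:F)^k * qPochF qq k := by
  have h1 : (qq:F) ^ ((k+1).choose 2) = ∏ m ∈ range k, qq ^ (k - m) := by
    rw [← sum_range_sub, ← Finset.prod_pow_eq_pow_sum]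
  rw [qPochF, h1, ← Finset.prod_mul_distrib]
  have h2 : ∀ m ∈ range k, qq ^ (k - m) * (1 - qq ^ (-(k:ℤ)) * qq ^ m)
      = -(1 - qq ^ (k - m)) := by
    intro m hm
    rw [Finset.mem_range] at hm
    have hz : (qq:F) ^ (k - m) * (qq ^ (-(k:ℤ)) * qq ^ m) = 1 := by
      rw [← zpow_natCast qq (k-m), ← zpow_natCast qq m, ← zpow_add₀ qq_ne_zero,
        ← zpow_add₀ qq_ne_zero]
      have : ((k - m : ℕ) : ℤ) + (-(k:ℤ) + m) = 0 := by omega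
      rw [this, zpow_zero]
    linear_combination -hz
  have h3 : ∀ m ∈ range k, -(1 - (qq:F) ^ (k - m)) = (-1) * (1 - qq ^ (k - m)) := by
    intro m _; ring
  rw [Finset.prod_congr rfl h2, Finset.prod_congr rfl h3, Finset.prod_mul_distrib,
    Finset.prod_const, Finset.card_range]
  congr 1
  rw [qPochF, ← Finset.prod_range_reflect (fun m => 1 - qq * qq ^ m) k]
  apply Finset.prod_congr rfl
  intro m hm
  rw [Finset.mem_range] at hm
  have : k - m = (k - 1 - m) + 1 := by omega
  rw [this, pow_succ']

lemma innerSumClosed (c T : ℕ) :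
    ∑ j ∈ range (c+1), ((qq:F)^T)^j / (qPochF (qq ^ (-(j:ℤ))) j * qPochF qq (c-j))
    = qPochF (qq^(T+1)) c / qPochF qq c := by
  rw [← qbt c (qq^(T+1)), Finset.sum_div]
  apply Finset.sum_congr rfl
  intro j hj
  rw [Finset.mem_range] at hj
  have hG : Gq c j = qPochF qq c / (qPochF qq j * qPochF qq (c-j)) := by
    rw [Gq, if_pos (by omega)]
  have hp := poch_neg j
  have hqc : (qq:F) ^ ((j+1).choose 2) ≠ 0 := pow_ne_zero _ qq_ne_zero
  have hinv : qPochF (qq ^ (-(j:ℤ))) j = (-1:F)^j * qPochF qq j / qq ^ ((j+1).choose 2) := by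
    rw [eq_div_iff hqc]
    linear_combination hp
  have hc2 : (j+1).choose 2 = j.choose 2 + j := by
    rw [Nat.choose_succ_succ, Nat.choose_one_right, Nat.add_comm]
  have hne1 : ((-1:F)^j) ≠ 0 := pow_ne_zero _ (by norm_num)
  have hnej : qPochF qq j ≠ 0 := qPochF_qq_ne j
  have hnecj : qPochF qq (c-j) ≠ 0 := qPochF_qq_ne (c-j)
  have hnec : qPochF qq c ≠ 0 := qPochF_qq_ne c
  rw [hinv, hG, hc2]
  have hexp : ((qq:F)^(T+1))^j = (qq^T)^j * qq^j := by
    rw [pow_succ, mul_pow]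
  rw [hexp, pow_add]
  field_simp
  ring_nf
  have h : ((-1:F))^(j*2) = 1 := by rw [mul_comm, pow_mul]; norm_num
  rw [h, mul_one]

/-- **The summation identity** (equation (3.19) / rec-Dn-3 in the proof of Lemma 2.4):
for `1 ≤ n`, `0 ≤ σ' < σ ≤ n` and `m = σ - σ'`,
`∑_{i=σ'+1}^{σ} ∑_{j=-1}^{c-1} q^{…} / ((q^{-j-1};q)_{j+1} (q;q)_{c-j-1})
  = (1-q^{m(c+1)})/(1-q^{c+1}) · [nc+m-1 choose c]_q`. -/
theorem splitting_sum_identity (n c : ℕ) (hn : 1 ≤ n)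
    (σ' σ : ℕ) (h1 : σ' < σ) (h2 : σ ≤ n) :
    (∑ i ∈ Finset.Icc (σ' + 1) σ, ∑ j ∈ Finset.Icc (-1 : ℤ) ((c : ℤ) - 1),
        qq ^ ((c : ℤ) * (j + 1) * (σ' : ℤ) +
              ((c : ℤ) + 1) * (j + 2) * ((i : ℤ) - 1 - (σ' : ℤ)) +
              ((c : ℤ) + 1) * (j + 1) * ((σ : ℤ) - (i : ℤ)) +
              (c : ℤ) * (j + 1) * ((n : ℤ) - (σ : ℤ))) /
          (qPochF (qq ^ (-j - 1)) (j + 1).toNat * qPochF qq ((c : ℤ) - j - 1).toNat)) =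
      (1 - qq ^ ((σ - σ') * (c + 1))) / (1 - qq ^ (c + 1)) *
        qbinom (n * c + (σ - σ') - 1) c := by

  obtain ⟨n', rfl⟩ : ∃ n', n = n' + 1 := ⟨n - 1, by omega⟩
  obtain ⟨m', rfl⟩ : ∃ m', σ = σ' + 1 + m' := ⟨σ - σ' - 1, by omega⟩
  set T : ℕ := c * n' + m' with hT
  have hmap : Finset.Icc (-1:ℤ) ((c:ℤ)-1)
      = (range (c+1)).map ⟨fun j : ℕ => (j:ℤ)-1, show Function.Injective (fun j : ℕ => (j:ℤ)-1) from fun a b h => by simpa using h⟩ := by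
    ext x
    simp only [Finset.mem_Icc, Finset.mem_map, Finset.mem_range,
      Function.Embedding.coeFn_mk]
    constructor
    · rintro ⟨ha, hb⟩; exact ⟨(x+1).toNat, by omega, by omega⟩
    · rintro ⟨a, ha, rfl⟩; omega
  simp only [hmap, Finset.sum_map, Function.Embedding.coeFn_mk]
  have hterm : ∀ i ∈ Finset.Icc (σ'+1) (σ'+1+m'), ∀ j' ∈ range (c+1),
      qq ^ ((c : ℤ) * (((j':ℤ)-1) + 1) * (σ' : ℤ) +
              ((c : ℤ) + 1) * (((j':ℤ)-1) + 2) * ((i : ℤ) - 1 - (σ' : ℤ)) +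
              ((c : ℤ) + 1) * (((j':ℤ)-1) + 1) * ((↑(σ'+1+m') : ℤ) - (i : ℤ)) +
              (c : ℤ) * (((j':ℤ)-1) + 1) * ((↑(n'+1) : ℤ) - (↑(σ'+1+m') : ℤ))) /
          (qPochF (qq ^ (-((j':ℤ)-1) - 1)) (((j':ℤ)-1) + 1).toNat *
            qPochF qq ((c : ℤ) - ((j':ℤ)-1) - 1).toNat)
      = qq ^ (((c:ℤ)+1)*((i:ℤ)-1-(σ':ℤ))) *
          (((qq:F)^T)^j' / (qPochF (qq ^ (-(j':ℤ))) j' * qPochF qq (c-j'))) := by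
    intro i hi j' hj'
    have e1 : (-((j':ℤ)-1) - 1 : ℤ) = -(j':ℤ) := by ring
    have e2 : (((j':ℤ)-1) + 1).toNat = j' := by omega
    have e3 : ((c:ℤ) - ((j':ℤ)-1) - 1).toNat = c - j' := by omega
    have e4 : (c : ℤ) * (((j':ℤ)-1) + 1) * (σ' : ℤ) +
              ((c : ℤ) + 1) * (((j':ℤ)-1) + 2) * ((i : ℤ) - 1 - (σ' : ℤ)) +
              ((c : ℤ) + 1) * (((j':ℤ)-1) + 1) * ((↑(σ'+1+m') : ℤ) - (i : ℤ)) +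
              (c : ℤ) * (((j':ℤ)-1) + 1) * ((↑(n'+1) : ℤ) - (↑(σ'+1+m') : ℤ))
        = ((c:ℤ)+1)*((i:ℤ)-1-(σ':ℤ)) + (T:ℤ)*(j':ℤ) := by
      rw [hT]; push_cast; ring
    have e5 : qq ^ ((T:ℤ)*(j':ℤ)) = ((qq:F)^T)^j' := by
      rw [zpow_mul, zpow_natCast, zpow_natCast]
    rw [e1, e2, e3, e4, zpow_add₀ qq_ne_zero, e5, mul_div_assoc]
  rw [Finset.sum_congr rfl (fun i hi => Finset.sum_congr rfl (hterm i hi))]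
  have hinner : ∀ i : ℕ, ∑ j' ∈ range (c+1), qq ^ (((c:ℤ)+1)*((i:ℤ)-1-(σ':ℤ))) *
          (((qq:F)^T)^j' / (qPochF (qq ^ (-(j':ℤ))) j' * qPochF qq (c-j')))
      = qq ^ (((c:ℤ)+1)*((i:ℤ)-1-(σ':ℤ))) * (qPochF (qq^(T+1)) c / qPochF qq c) := by
    intro i
    rw [← Finset.mul_sum, innerSumClosed c T]
  rw [Finset.sum_congr rfl (fun i _ => hinner i), ← Finset.sum_mul]
  have hmap2 : Finset.Icc (σ'+1) (σ'+1+m')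
      = (range (m'+1)).map ⟨fun k => σ'+1+k, show Function.Injective (fun k : ℕ => σ'+1+k) from fun a b h => by simpa using h⟩ := by
    ext x
    simp only [Finset.mem_Icc, Finset.mem_map, Finset.mem_range,
      Function.Embedding.coeFn_mk]
    constructor
    · rintro ⟨ha, hb⟩; exact ⟨x - (σ'+1), by omega, by omega⟩
    · rintro ⟨a, ha, rfl⟩; omega
  rw [hmap2, Finset.sum_map]
  simp only [Function.Embedding.coeFn_mk]
  have houter : ∀ k ∈ range (m'+1),
      qq ^ (((c:ℤ)+1)*((↑(σ'+1+k):ℤ)-1-(σ':ℤ))) = ((qq:F)^(c+1))^k := by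
    intro k _
    have : ((c:ℤ)+1)*((↑(σ'+1+k):ℤ)-1-(σ':ℤ)) = (((c+1)*k : ℕ) : ℤ) := by
      push_cast; ring
    rw [this, zpow_natCast, pow_mul]
  rw [Finset.sum_congr rfl houter, geom_sum_eq (pow_qq_ne_one (by omega)) (m'+1)]
  have hσ : σ' + 1 + m' - σ' = m' + 1 := by omega
  rw [hσ]
  have hb : qbinom ((n'+1) * c + (m'+1) - 1) c = qPochF (qq^(T+1)) c / qPochF qq c := by
    have hidx : (n'+1) * c + (m'+1) - 1 = n'*c + c + m' := by
      have h : (n'+1)*c = n'*c + c := by ring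
      omega
    rw [qbinom, hidx]
    congr 2
    have : ((n'*c + c + m' : ℕ) : ℤ) - (c:ℤ) + 1 = ((T+1 : ℕ) : ℤ) := by
      rw [hT]; push_cast; ring
    rw [this, zpow_natCast]
  rw [hb]
  have hpow : ((qq:F)^(c+1))^(m'+1) = qq ^ ((m'+1)*(c+1)) := by
    rw [← pow_mul, Nat.mul_comm]
  rw [hpow]
  rw [show ((qq:F)^((m'+1)*(c+1)) - 1) = -(1 - qq^((m'+1)*(c+1))) by ring,
    show ((qq:F)^(c+1) - 1) = -(1 - qq^(c+1)) by ring, neg_div_neg_eq]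

end
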